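/- arXiv:2602.06073 — 7 statements merged into one kernel-verified Lean document; each statement's English description precedes it below -/
import Mathlib

section
/- The positive integers n for which 2ⁿ − 7 is a perfect square are exactly n ∈ {3, 4, 5, 7, 15}. Equivalently, the set of pairs (z, n) of positive integers with z² + 7 = 2ⁿ is exactly {(1,3), (3,4), (5,5), (11,7), (181,15)}. -/
/-!
Put `ω = (1 + √-7) / 2`, a root of `x ^ 2 - x + 2`, and `W m = X m + Y m √-7 = 2 ω ^ m`. As
`2 = ω ω̄`, a solution of `z ^ 2 + 7 = 2 ^ (m + 2)` should be `z + √-7 = ± 2 ω ^ m` or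
`± 2 ω̄ ^ m`, i.e. `z = |X m|` and `Y m = ± 1`. Instead of unique factorisation in `ℤ[ω]` this is
proved by descent: for odd `a, b`, one of `(a ± b √-7) ω̄ / 2` again has odd coordinates, and its
norm is half as large.

The equation `Y m = 1` holds only for `m = 1, 2`, because `Y m ≡ 5` or `7 (mod 8)` once `m ≥ 3`.
The equation `Y m = -1` holds for `m = 3, 13, 5`, one index in each residue class mod 3, and it
cannot hold at two indices `m < m + 3 D`. Otherwise the norm `2 ^ (m + 2) Y (3 D) ^ 2` of
`W (3 D) - 2` has even `7`-adic valuation, while `2 (W 3 ^ D - 2 ^ D) = 2 ^ D (W (3 D) - 2)` with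
`W 3 = -5 - √-7 ≡ 2 (mod √-7)`, and lifting the exponent at the ramified prime `√-7` makes this
valuation odd.
-/

namespace Zsqrtd

theorem norm_pow {d : ℤ} (z : ℤ√d) (k : ℕ) : (z ^ k).norm = z.norm ^ k :=
  map_pow normMonoidHom z k

theorem eq_of_two_mul_eq_two_mul {d : ℤ} {a b : ℤ√d} (h : 2 * a = 2 * b) : a = b :=
  Zsqrtd.eq_of_smul_eq_smul_left (a := 2) two_ne_zero (by exact_mod_cast h)

end Zsqrtd

namespace RamanujanNagell

open Zsqrtd

theorem sqrtd_dvd_iff {z : ℤ√(-7)} : sqrtd ∣ z ↔ 7 ∣ z.re := by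
  constructor
  · rintro ⟨c, rfl⟩
    simp
  · rintro ⟨r, hr⟩
    exact ⟨⟨z.im, -r⟩, by ext <;> simp [hr]⟩

theorem prime_sqrtd : Prime (sqrtd : ℤ√(-7)) := by
  refine ⟨fun h => by simpa using congrArg im h, fun h => ?_, fun a b h => ?_⟩
  · have := sqrtd_dvd_iff.1 (isUnit_iff_dvd_one.1 h)
    norm_num at this
  · simp only [sqrtd_dvd_iff, re_mul] at *
    refine Int.Prime.dvd_mul' (by norm_num) ((Int.dvd_add_left ?_).1 h)
    exact ⟨-(a.im * b.im), by ring⟩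

theorem sqrtd_mul_sqrtd : (sqrtd : ℤ√(-7)) * sqrtd = -7 := by
  rw [dmuld]; push_cast; rfl

theorem norm_sqrtd : (sqrtd : ℤ√(-7)).norm = 7 := by
  simp [norm_def]

theorem sqrtd_dvd_of_seven_dvd_norm {g : ℤ√(-7)} (h : 7 ∣ g.norm) : sqrtd ∣ g := by
  have hre : g.re * g.re = g.norm - 7 * (g.im * g.im) := by rw [norm_def]; ring
  rw [sqrtd_dvd_iff]
  exact (Int.Prime.dvd_mul' (by norm_num) (hre ▸ dvd_sub h (dvd_mul_right _ _))).elim id id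

/-- Expanding `a ^ 7 - (a - √-7 c) ^ 7` and substituting `7 = -√-7 ^ 2` into the binomial
coefficients `7, 21, 35` leaves the cofactor `s ≡ -a ^ 6 (mod √-7)`. -/
theorem exists_pow_seven_sub_pow_seven_eq {a b : ℤ√(-7)} (ha : ¬ sqrtd ∣ a)
    (hab : sqrtd ∣ a - b) : ∃ s, a ^ 7 - b ^ 7 = sqrtd ^ 2 * (a - b) * s ∧ ¬ sqrtd ∣ s := by
  obtain ⟨c, hc⟩ := hab
  set π : ℤ√(-7) := sqrtd
  set r := 3 * a ^ 5 * c - 5 * π * a ^ 4 * c ^ 2 + 5 * π ^ 2 * a ^ 3 * c ^ 3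
    - 3 * π ^ 3 * a ^ 2 * c ^ 4 + π ^ 4 * a * c ^ 5 + π ^ 3 * c ^ 6
  refine ⟨-a ^ 6 + π * r, ?_, fun h => ha (prime_sqrtd.dvd_of_dvd_pow (n := 6) ?_)⟩
  · obtain rfl : b = a - π * c := by rw [← hc]; ring
    linear_combination (π * c * a * (a ^ 5 - 3 * π * c * a ^ 4 + 5 * π ^ 2 * c ^ 2 * a ^ 3
      - 5 * π ^ 3 * c ^ 3 * a ^ 2 + 3 * π ^ 4 * c ^ 4 * a - π ^ 5 * c ^ 5)) * sqrtd_mul_sqrtd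
  · simpa using dvd_sub (dvd_mul_right π r) h

theorem exists_pow_sub_pow_eq_sqrtd_pow_odd_mul {x y : ℤ√(-7)} (hx : ¬ sqrtd ∣ x)
    (hxy : sqrtd ∣ x - y) (hxy₂ : ¬ sqrtd ^ 2 ∣ x - y) {n : ℕ} (hn : n ≠ 0) :
    ∃ t g, x ^ n - y ^ n = sqrtd ^ (2 * t + 1) * g ∧ ¬ sqrtd ∣ g := by
  induction n using Nat.strong_induction_on with
  | _ n ih =>
  by_cases h7 : 7 ∣ n
  · obtain ⟨k, rfl⟩ := h7
    obtain ⟨t, g, hg, hgπ⟩ := ih k (by omega) (by omega)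
    have hxk : ¬ sqrtd ∣ x ^ k := fun h => hx (prime_sqrtd.dvd_of_dvd_pow h)
    obtain ⟨s, hs, hsπ⟩ := exists_pow_seven_sub_pow_seven_eq hxk
      (hg ▸ dvd_mul_of_dvd_left (dvd_pow_self _ (by omega)) _)
    refine ⟨t + 1, g * s, ?_, prime_sqrtd.not_dvd_mul hgπ hsπ⟩
    rw [pow_mul', pow_mul', hs, hg]
    ring
  · obtain ⟨g, hg⟩ := hxy
    have hgπ : ¬ sqrtd ∣ g := fun h => hxy₂ (hg ▸ pow_two (sqrtd : ℤ√(-7)) ▸ mul_dvd_mul_left _ h)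
    refine ⟨0, g * ∑ i ∈ Finset.range n, x ^ i * y ^ (n - 1 - i), ?_,
      prime_sqrtd.not_dvd_mul hgπ (not_dvd_geom_sum₂ prime_sqrtd ⟨g, hg⟩ hx ?_)⟩
    · rw [← geom_sum₂_mul, hg]
      ring
    · rw [sqrtd_dvd_iff, re_natCast]
      exact_mod_cast h7

theorem mul_sq_ne_pow_odd_mul {p : ℕ} (hp : p.Prime) {c w : ℤ} (hc : ¬ (p : ℤ) ∣ c)
    (hw : ¬ (p : ℤ) ∣ w) (y : ℤ) (t : ℕ) : c * y ^ 2 ≠ p ^ (2 * t + 1) * w := by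
  have := Fact.mk hp
  intro h
  have hy : y ≠ 0 := by
    rintro rfl
    simp [hp.ne_zero, show w ≠ 0 by rintro rfl; simp at hw] at h
  rw [Int.natCast_dvd] at hc hw
  have hv := congrArg (fun z : ℤ => padicValNat p z.natAbs) h
  simp only [Int.natAbs_mul, Int.natAbs_pow, Int.natAbs_natCast] at hv
  rw [padicValNat.mul (by rintro h; simp [h] at hc) (by simpa using hy),
    padicValNat.mul (by simp [hp.ne_zero]) (by rintro h; simp [h] at hw),
    padicValNat.pow, padicValNat.prime_pow,
    padicValNat.eq_zero_of_not_dvd hc, padicValNat.eq_zero_of_not_dvd hw] at hv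
  omega

def Y : ℕ → ℤ
  | 0 => 0
  | 1 => 1
  | n + 2 => Y (n + 1) - 2 * Y n

def X (n : ℕ) : ℤ := 2 * Y (n + 1) - Y n

theorem two_mul_Y_succ (n : ℕ) : 2 * Y (n + 1) = X n + Y n := by
  rw [X]; ring

theorem two_mul_X_succ (n : ℕ) : 2 * X (n + 1) = X n - 7 * Y n := by
  simp only [X, Y]; ring

theorem X_sq_add_seven_mul_Y_sq (n : ℕ) : X n ^ 2 + 7 * Y n ^ 2 = 2 ^ (n + 2) := by
  induction n with
  | zero => decide
  | succ n ih =>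
    have h : 4 * (X (n + 1) ^ 2 + 7 * Y (n + 1) ^ 2) = 8 * (X n ^ 2 + 7 * Y n ^ 2) := by
      linear_combination (2 * X (n + 1) + X n - 7 * Y n) * two_mul_X_succ n
        + 7 * (2 * Y (n + 1) + X n + Y n) * two_mul_Y_succ n
    linarith [pow_succ (2 : ℤ) (n + 2)]

theorem odd_Y_succ (n : ℕ) : Odd (Y (n + 1)) := by
  induction n using Nat.twoStepInduction with
  | zero => decide
  | one => decide
  | more n _ ih => exact ih.sub_even (even_two_mul _)

theorem Y_mod_eight (k : ℕ) : Y (2 * k + 3) % 8 = 7 ∧ Y (2 * k + 4) % 8 = 5 := by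
  induction k with
  | zero => decide
  | succ k ih =>
    have h5 : Y (2 * k + 5) = Y (2 * k + 4) - 2 * Y (2 * k + 3) := rfl
    have h6 : Y (2 * k + 6) = Y (2 * k + 5) - 2 * Y (2 * k + 4) := rfl
    show Y (2 * k + 5) % 8 = 7 ∧ Y (2 * k + 6) % 8 = 5
    omega

theorem eq_one_or_eq_two_of_Y_eq_one {m : ℕ} (h : Y m = 1) : m = 1 ∨ m = 2 := by
  rcases lt_or_ge m 3 with hm | hm
  · interval_cases m <;> simp_all [Y]
  · obtain ⟨k, rfl | rfl⟩ : ∃ k, m = 2 * k + 3 ∨ m = 2 * k + 4 := ⟨(m - 3) / 2, by omega⟩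
    · have := (Y_mod_eight k).1
      simp_all
    · have := (Y_mod_eight k).2
      simp_all

/-- `c + k √-7 = (a + b √-7) (1 - √-7) / 4`. -/
theorem exists_descent {a b : ℤ} {m : ℕ} (hm : 1 ≤ m) (hb : Odd b) (h4 : 4 ∣ b - a)
    (h : a ^ 2 + 7 * b ^ 2 = 2 ^ (m + 3)) :
    ∃ c k : ℤ, Odd c ∧ Odd k ∧ c ^ 2 + 7 * k ^ 2 = 2 ^ (m + 2) ∧
      2 * a = c - 7 * k ∧ 2 * b = c + k := by
  obtain ⟨k, hk⟩ := h4
  obtain rfl : a = b - 4 * k := by linarith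
  have hk : Odd k := by
    have hbk : b * (b - k) + 2 * k ^ 2 = 2 ^ m := by
      have : (8 : ℤ) * 2 ^ m = 2 ^ (m + 3) := by ring
      linarith
    have heven : Even (b * (b - k)) := by
      rw [← add_sub_cancel_right (b * (b - k)) (2 * k ^ 2), hbk]
      exact ((Int.even_pow' (by omega)).2 even_two).sub (even_two_mul _)
    have := (Int.even_mul.1 heven).resolve_left (Int.not_even_iff_odd.2 hb)
    rwa [Int.even_sub, iff_false_intro (Int.not_even_iff_odd.2 hb), false_iff,
      Int.not_even_iff_odd] at this
  refine ⟨2 * b - k, k, (even_two_mul b).sub_odd hk, hk, ?_, by ring, by ring⟩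
  have : (2 : ℤ) * 2 ^ (m + 2) = 2 ^ (m + 3) := by ring
  linarith

theorem sq_eq_X_sq_and_sq_eq_Y_sq {m : ℕ} (hm : 1 ≤ m) :
    ∀ {a b : ℤ}, Odd a → Odd b → a ^ 2 + 7 * b ^ 2 = 2 ^ (m + 2) →
      a ^ 2 = X m ^ 2 ∧ b ^ 2 = Y m ^ 2 := by
  induction m, hm using Nat.le_induction with
  | base =>
    intro a b ha hb h
    have := Int.sq_mod_four_eq_one_of_odd ha
    have := Int.sq_mod_four_eq_one_of_odd hb
    have := sq_nonneg a
    have := sq_nonneg b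
    show a ^ 2 = 1 ∧ b ^ 2 = 1
    omega
  | succ m hm ih =>
    intro a b ha hb h
    wlog h4 : 4 ∣ b - a generalizing b
    · have h4' : 4 ∣ -b - a := by
        obtain ⟨r, rfl⟩ := ha
        obtain ⟨s, rfl⟩ := hb
        omega
      simpa using this hb.neg (by linear_combination h) h4'
    obtain ⟨c, k, hc, hk, hck, hac, hbk⟩ := exists_descent hm hb h4 h
    obtain ⟨hcX, hkY⟩ := ih hc hk hck
    have hYm : Odd (Y m) := by simpa [Nat.sub_add_cancel hm] using odd_Y_succ (m - 1)
    have hY := two_mul_Y_succ m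
    have hX := two_mul_X_succ m
    rcases sq_eq_sq_iff_eq_or_eq_neg.1 hcX with rfl | rfl <;>
      rcases sq_eq_sq_iff_eq_or_eq_neg.1 hkY with rfl | rfl
    · constructor <;> congr 1 <;> linarith
    · obtain rfl : b = Y (m + 1) - Y m := by linarith
      exact absurd hb (Int.not_odd_iff_even.2 ((odd_Y_succ m).sub_odd hYm))
    · obtain rfl : b = Y m - Y (m + 1) := by linarith
      exact absurd hb (Int.not_odd_iff_even.2 (hYm.sub_odd (odd_Y_succ m)))
    · obtain rfl : a = -X (m + 1) := by linarith
      obtain rfl : b = -Y (m + 1) := by linarith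
      constructor <;> ring

def W (n : ℕ) : ℤ√(-7) := ⟨X n, Y n⟩

theorem W_zero : W 0 = 2 := rfl

theorem two_mul_W_succ (n : ℕ) : 2 * W (n + 1) = W n * ⟨1, 1⟩ := by
  ext <;> simp only [W, re_mul, im_mul, re_ofNat, im_ofNat] <;> push_cast
  · linear_combination two_mul_X_succ n
  · linear_combination two_mul_Y_succ n

theorem two_mul_W_add (j k : ℕ) : 2 * W (j + k) = W j * W k := by
  induction k with
  | zero => rw [W_zero, add_zero, mul_comm]
  | succ k ih =>
    refine eq_of_two_mul_eq_two_mul ?_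
    calc 2 * (2 * W (j + k + 1)) = 2 * W (j + k) * ⟨1, 1⟩ := by rw [two_mul_W_succ, mul_assoc]
      _ = 2 * (W j * W (k + 1)) := by rw [ih, mul_assoc, ← two_mul_W_succ]; ring

theorem two_mul_W_pow (n k : ℕ) : 2 * W n ^ k = 2 ^ k * W (n * k) := by
  induction k with
  | zero => simp [W_zero]
  | succ k ih => rw [pow_succ, ← mul_assoc, ih, mul_assoc, ← two_mul_W_add, mul_add_one]; ring

theorem norm_W_sub_two {m n : ℕ} (hm : Y m = -1) (hmn : Y (m + n) = -1) :
    (W n - 2).norm = 2 ^ (m + 2) * Y n ^ 2 := by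
  have hX : X n - 2 = X m * Y n := by
    have := congrArg im (two_mul_W_add m n)
    simp only [W, im_mul, re_ofNat, im_ofNat, hm, hmn] at this
    push_cast at this
    linarith
  have hXm := X_sq_add_seven_mul_Y_sq m
  rw [hm] at hXm
  simp only [norm_def, W, re_sub, im_sub, re_ofNat, im_ofNat]
  push_cast
  rw [hX, ← hXm]
  ring

theorem exists_W_three_pow_sub_two_pow_eq {D : ℕ} (hD : D ≠ 0) :
    ∃ t g, W 3 ^ D - 2 ^ D = sqrtd ^ (2 * t + 1) * g ∧ ¬ sqrtd ∣ g := by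
  have hW3 : W 3 = ⟨-5, -1⟩ := rfl
  refine exists_pow_sub_pow_eq_sqrtd_pow_odd_mul ?_ ?_ ?_ hD
  · rw [sqrtd_dvd_iff, hW3]; decide
  · rw [sqrtd_dvd_iff, hW3]; decide
  · rw [sq, dmuld, intCast_dvd, hW3]; decide

theorem Y_add_three_mul_ne_neg_one {m D : ℕ} (hm : Y m = -1) (hD : D ≠ 0) :
    Y (m + 3 * D) ≠ -1 := by
  intro hmD
  obtain ⟨t, g, hg, hgπ⟩ := exists_W_three_pow_sub_two_pow_eq hD
  have key : 2 * (W 3 ^ D - 2 ^ D) = 2 ^ D * (W (3 * D) - 2) := by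
    rw [mul_sub, two_mul_W_pow]; ring
  have h2 : (2 : ℤ√(-7)).norm = 4 := by simp [norm_def]
  have hnorm := congrArg Zsqrtd.norm key
  simp only [hg, Zsqrtd.norm_mul, norm_pow, norm_W_sub_two hm hmD, h2, norm_sqrtd] at hnorm
  have h7 := Nat.prime_iff_prime_int.mp Nat.prime_seven
  refine mul_sq_ne_pow_odd_mul Nat.prime_seven (c := 4 ^ D * 2 ^ (m + 2)) (w := 4 * g.norm)
    ?_ ?_ (Y (3 * D)) t (by push_cast; linear_combination -hnorm)
  · exact h7.not_dvd_mul (fun h => absurd (h7.dvd_of_dvd_pow h) (by norm_num))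
      (fun h => absurd (h7.dvd_of_dvd_pow h) (by norm_num))
  · exact h7.not_dvd_mul (by norm_num) (fun h => hgπ (sqrtd_dvd_of_seven_dvd_norm h))

theorem eq_three_or_eq_five_or_eq_thirteen_of_Y_eq_neg_one {m : ℕ} (h : Y m = -1) :
    m = 3 ∨ m = 5 ∨ m = 13 := by
  rcases le_or_gt m 13 with hm | hm
  · interval_cases m <;> revert h <;> decide
  · obtain ⟨m₀, D, hm₀, hD, rfl⟩ : ∃ m₀ D, Y m₀ = -1 ∧ D ≠ 0 ∧ m = m₀ + 3 * D := by
      rcases (by omega : m % 3 = 0 ∨ m % 3 = 1 ∨ m % 3 = 2) with h3 | h3 | h3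
      · exact ⟨3, (m - 3) / 3, rfl, by omega, by omega⟩
      · exact ⟨13, (m - 13) / 3, rfl, by omega, by omega⟩
      · exact ⟨5, (m - 5) / 3, rfl, by omega, by omega⟩
    exact absurd h (Y_add_three_mul_ne_neg_one hm₀ hD)

end RamanujanNagell

open RamanujanNagell in
/-- The Ramanujan–Nagell theorem: the positive integer solutions of `z² + 7 = 2ⁿ`
are exactly `(1,3), (3,4), (5,5), (11,7), (181,15)`. -/
theorem ramanujan_nagell :
    {p : ℕ × ℕ | 0 < p.1 ∧ 0 < p.2 ∧ p.1 ^ 2 + 7 = 2 ^ p.2} =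
      {(1, 3), (3, 4), (5, 5), (11, 7), (181, 15)} := by
  ext ⟨z, n⟩
  simp only [Set.mem_ofPred_eq, Set.mem_insert_iff, Set.mem_singleton_iff, Prod.mk.injEq]
  constructor
  · rintro ⟨hz, -, h⟩
    have hn : 3 ≤ n := by
      by_contra! hn
      interval_cases n <;> omega
    obtain ⟨m, rfl⟩ : ∃ m, n = m + 2 := ⟨n - 2, by omega⟩
    have hodd : Odd (z : ℤ) := by
      have : Even (z ^ 2 + 7) := h ▸ (Nat.even_pow.2 ⟨even_two, by omega⟩)
      simpa [Nat.even_add, Nat.even_pow, parity_simps] using this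
    obtain ⟨hX, hY⟩ := sq_eq_X_sq_and_sq_eq_Y_sq (by omega : 1 ≤ m) hodd odd_one
      (by push_cast [one_pow, mul_one]; exact_mod_cast h)
    obtain rfl : z = (X m).natAbs := by simpa using Int.natAbs_eq_iff_sq_eq.2 hX
    rcases sq_eq_one_iff.1 (hY.symm.trans (one_pow 2)) with hY | hY
    · rcases eq_one_or_eq_two_of_Y_eq_one hY with rfl | rfl <;> decide
    · rcases eq_three_or_eq_five_or_eq_thirteen_of_Y_eq_neg_one hY with rfl | rfl | rfl <;> decide
  · rintro (⟨rfl, rfl⟩ | ⟨rfl, rfl⟩ | ⟨rfl, rfl⟩ | ⟨rfl, rfl⟩ | ⟨rfl, rfl⟩) <;> norm_num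
end

section
/- Let a, b, c be distinct rational numbers and let X, Y be rational numbers with Y ≠ 0 and Y² = (X + a)(X + b)(X + c). Define λ = ((X+a)(X+b) + (X+a)(X+c) + (X+b)(X+c)) / (2Y) and X₂ = λ² − (a + b + c + 2X). Then each of the three numbers X₂ + a, X₂ + b and X₂ + c is the square of a rational number. -/
/-! With `u = X + a`, `v = X + b`, `w = X + c` one has `Y² = uvw` and `2Yλ = uv + vw + wu`, and
`X₂ + a = λ² - (v + w)`. Expanding `(uv + wu - vw)² = (2Yλ - 2vw)²` and dividing by `4Y² = 4uvw`
shows `λ² - (v + w) = ((uv + wu - vw) / 2Y)²`; the other two cases are the same identity with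
the roles of `u, v, w` permuted. -/

theorem sq_tangent_slope_sub_eq_sq {K : Type*} [Field K] [NeZero (2 : K)] {u v w Y l : K}
    (hY : Y ≠ 0) (hcurve : Y ^ 2 = u * v * w) (hl : l = (u * v + v * w + w * u) / (2 * Y)) :
    l ^ 2 - (v + w) = ((u * v + w * u - v * w) / (2 * Y)) ^ 2 := by
  subst hl
  field_simp
  linear_combination (-4 * (v + w)) * hcurve

theorem doubling_gives_squares_general
    (a b c X Y : ℚ) (hY : Y ≠ 0)
    (hcurve : Y ^ 2 = (X + a) * (X + b) * (X + c))
    (l X₂ : ℚ)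
    (hl : l = ((X + a) * (X + b) + (X + a) * (X + c) + (X + b) * (X + c)) / (2 * Y))
    (hX₂ : X₂ = l ^ 2 - (a + b + c + 2 * X)) :
    (∃ r : ℚ, X₂ + a = r ^ 2) ∧ (∃ s : ℚ, X₂ + b = s ^ 2) ∧ (∃ t : ℚ, X₂ + c = t ^ 2) := by
  have square_of_roles (u v w : ℚ) (huvw : Y ^ 2 = u * v * w)
      (hslope : l = (u * v + v * w + w * u) / (2 * Y)) : ∃ r : ℚ, l ^ 2 - (v + w) = r ^ 2 :=
    ⟨_, sq_tangent_slope_sub_eq_sq hY huvw hslope⟩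
  subst hX₂
  refine ⟨?_, ?_, ?_⟩
  · obtain ⟨r, hr⟩ := square_of_roles (X + a) (X + b) (X + c) (by linear_combination hcurve)
      (by rw [hl]; ring)
    exact ⟨r, by rw [← hr]; ring⟩
  · obtain ⟨s, hs⟩ := square_of_roles (X + b) (X + a) (X + c) (by linear_combination hcurve)
      (by rw [hl]; ring)
    exact ⟨s, by rw [← hs]; ring⟩
  · obtain ⟨t, ht⟩ := square_of_roles (X + c) (X + a) (X + b) (by linear_combination hcurve)
      (by rw [hl]; ring)
    exact ⟨t, by rw [← ht]; ring⟩

/-- 2-descent doubling identity: if `Y² = (X+a)(X+b)(X+c)` with `a, b, c` distinct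
rationals and `Y ≠ 0`, then the doubled `x`-coordinate
`X₂ = λ² − (a + b + c + 2X)` makes `X₂ + a`, `X₂ + b`, `X₂ + c` all rational squares. -/
theorem doubling_gives_squares
    (a b c X Y : ℚ) (hab : a ≠ b) (hac : a ≠ c) (hbc : b ≠ c) (hY : Y ≠ 0)
    (hcurve : Y ^ 2 = (X + a) * (X + b) * (X + c))
    (l X₂ : ℚ)
    (hl : l = ((X + a) * (X + b) + (X + a) * (X + c) + (X + b) * (X + c)) / (2 * Y))
    (hX₂ : X₂ = l ^ 2 - (a + b + c + 2 * X)) :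
    (∃ r : ℚ, X₂ + a = r ^ 2) ∧ (∃ s : ℚ, X₂ + b = s ^ 2) ∧ (∃ t : ℚ, X₂ + c = t ^ 2) :=
  doubling_gives_squares_general a b c X Y hY hcurve l X₂ hl hX₂
end

section
/- Let B ≥ 2 be an integer and let n₁ < n₂ < n₃ be nonnegative integers with n₃ ≤ n₁ + n₂ and n₁ + n₂ + n₃ even. Define D = B^{n₁+n₂−n₃} + B^{n₁+n₃−n₂} + B^{n₂+n₃−n₁} − 2·B^{n₁} − 2·B^{n₂} − 2·B^{n₃}. Then for each i ∈ {1, 2, 3} the integer D + 4·B^{nᵢ} is a perfect square; explicitly, D + 4·B^{n₁} = (u + v − w)², D + 4·B^{n₂} = (u − v + w)², D + 4·B^{n₃} = (−u + v + w)², where u = B^{(n₁+n₂−n₃)/2}, v = B^{(n₁+n₃−n₂)/2}, w = B^{(n₂+n₃−n₁)/2}. Hence the equation z² = D + 4·Bⁿ has at least three solutions in nonnegative integers. -/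
/-!
Write `a, b, c` for the halves of `n₁ + n₂ - n₃`, `n₁ + n₃ - n₂`, `n₂ + n₃ - n₁`, so that
`n₁ = a + b`, `n₂ = a + c`, `n₃ = b + c`. With `u = B^a`, `v = B^b`, `w = B^c` this gives
`B^{n₁} = uv`, `B^{n₂} = uw`, `B^{n₃} = vw` and `D = u² + v² + w² - 2(uv + uw + vw)`, and the three
squares are polynomial identities in `u, v, w`. The solutions `(|u + v - w|, nᵢ)` are distinct
because their exponents are.
-/

theorem pow_half_sq {M : Type*} [Monoid M] (B : M) {n : ℕ} (hn : Even n) :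
    (B ^ (n / 2)) ^ 2 = B ^ n := by
  rw [← pow_mul, Nat.div_two_mul_two_of_even hn]

theorem pow_half_mul_pow_half {M : Type*} [Monoid M] (B : M) {m n k : ℕ}
    (hm : Even m) (hn : Even n) (h : m + n = 2 * k) :
    B ^ (m / 2) * B ^ (n / 2) = B ^ k := by
  obtain ⟨i, rfl⟩ := hm
  obtain ⟨j, rfl⟩ := hn
  rw [← pow_add]
  congr 1
  omega

theorem Set.three_le_encard_of_mem {α : Type*} {s : Set α} {x y z : α}
    (hxy : x ≠ y) (hxz : x ≠ z) (hyz : y ≠ z) (hx : x ∈ s) (hy : y ∈ s) (hz : z ∈ s) :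
    3 ≤ s.encard := by
  rw [← encard_eq_three.2 ⟨x, y, z, hxy, hxz, hyz, rfl⟩]
  exact encard_le_encard (by simp [insert_subset_iff, hx, hy, hz])

theorem triple_solution_construction_general
    (B : ℤ) (n₁ n₂ n₃ : ℕ)
    (h12 : n₁ < n₂) (h23 : n₂ < n₃) (h3 : n₃ ≤ n₁ + n₂)
    (heven : Even (n₁ + n₂ + n₃))
    (D : ℤ)
    (hD : D = B ^ (n₁ + n₂ - n₃) + B ^ (n₁ + n₃ - n₂) + B ^ (n₂ + n₃ - n₁)
            - 2 * B ^ n₁ - 2 * B ^ n₂ - 2 * B ^ n₃)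
    (u v w : ℤ)
    (hu : u = B ^ ((n₁ + n₂ - n₃) / 2))
    (hv : v = B ^ ((n₁ + n₃ - n₂) / 2))
    (hw : w = B ^ ((n₂ + n₃ - n₁) / 2)) :
    D + 4 * B ^ n₁ = (u + v - w) ^ 2 ∧
      D + 4 * B ^ n₂ = (u - v + w) ^ 2 ∧
      D + 4 * B ^ n₃ = (-u + v + w) ^ 2 ∧
      3 ≤ {p : ℤ × ℕ | 0 ≤ p.1 ∧ p.1 ^ 2 = D + 4 * B ^ p.2}.encard := by
  have hsum := Nat.even_iff.1 heven
  have e₁ : Even (n₁ + n₂ - n₃) := Nat.even_iff.2 (by omega)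
  have e₂ : Even (n₁ + n₃ - n₂) := Nat.even_iff.2 (by omega)
  have e₃ : Even (n₂ + n₃ - n₁) := Nat.even_iff.2 (by omega)
  have huv : B ^ n₁ = u * v := by rw [hu, hv, pow_half_mul_pow_half B e₁ e₂ (k := n₁) (by omega)]
  have huw : B ^ n₂ = u * w := by rw [hu, hw, pow_half_mul_pow_half B e₁ e₃ (k := n₂) (by omega)]
  have hvw : B ^ n₃ = v * w := by rw [hv, hw, pow_half_mul_pow_half B e₂ e₃ (k := n₃) (by omega)]
  have hD' : D = u ^ 2 + v ^ 2 + w ^ 2 - 2 * (u * v) - 2 * (u * w) - 2 * (v * w) := by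
    rw [hD, huv, huw, hvw, hu, hv, hw, pow_half_sq B e₁, pow_half_sq B e₂, pow_half_sq B e₃]
  have h₁ : D + 4 * B ^ n₁ = (u + v - w) ^ 2 := by rw [hD', huv]; ring
  have h₂ : D + 4 * B ^ n₂ = (u - v + w) ^ 2 := by rw [hD', huw]; ring
  have h₃ : D + 4 * B ^ n₃ = (-u + v + w) ^ 2 := by rw [hD', hvw]; ring
  refine ⟨h₁, h₂, h₃, Set.three_le_encard_of_mem (x := (|u + v - w|, n₁))
    (y := (|u - v + w|, n₂)) (z := (|-u + v + w|, n₃)) ?_ ?_ ?_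
    ⟨abs_nonneg _, (sq_abs _).trans h₁.symm⟩ ⟨abs_nonneg _, (sq_abs _).trans h₂.symm⟩
    ⟨abs_nonneg _, (sq_abs _).trans h₃.symm⟩⟩ <;>
  simp only [ne_eq, Prod.mk.injEq, not_and] <;> omega

/-- Triple-solution construction: for `B ≥ 2` and `n₁ < n₂ < n₃` with `n₃ ≤ n₁ + n₂`
and `n₁ + n₂ + n₃` even, the value
`D = B^{n₁+n₂−n₃} + B^{n₁+n₃−n₂} + B^{n₂+n₃−n₁} − 2B^{n₁} − 2B^{n₂} − 2B^{n₃}`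
makes `D + 4·B^{nᵢ}` a perfect square for `i = 1, 2, 3`, so `z² = D + 4·Bⁿ` has at
least three solutions in nonnegative integers. -/
theorem triple_solution_construction
    (B : ℤ) (hB : 2 ≤ B) (n₁ n₂ n₃ : ℕ)
    (h12 : n₁ < n₂) (h23 : n₂ < n₃) (h3 : n₃ ≤ n₁ + n₂)
    (heven : Even (n₁ + n₂ + n₃))
    (D : ℤ)
    (hD : D = B ^ (n₁ + n₂ - n₃) + B ^ (n₁ + n₃ - n₂) + B ^ (n₂ + n₃ - n₁)
            - 2 * B ^ n₁ - 2 * B ^ n₂ - 2 * B ^ n₃)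
    (u v w : ℤ)
    (hu : u = B ^ ((n₁ + n₂ - n₃) / 2))
    (hv : v = B ^ ((n₁ + n₃ - n₂) / 2))
    (hw : w = B ^ ((n₂ + n₃ - n₁) / 2)) :
    D + 4 * B ^ n₁ = (u + v - w) ^ 2 ∧
      D + 4 * B ^ n₂ = (u - v + w) ^ 2 ∧
      D + 4 * B ^ n₃ = (-u + v + w) ^ 2 ∧
      3 ≤ {p : ℤ × ℕ | 0 ≤ p.1 ∧ p.1 ^ 2 = D + 4 * B ^ p.2}.encard :=
  triple_solution_construction_general B n₁ n₂ n₃ h12 h23 h3 heven D hD u v w hu hv hw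
end

section
/- For each n ∈ {6, 7, 8, 10} there exists a nonnegative integer z such that z² = 277665·17⁶ + 34ⁿ. Hence the equation z² = 277665·17⁶ + 34ⁿ of Ramanujan–Nagell type has at least four solutions in nonnegative integers (z, n). -/
/-! For `n ≥ 6` put `z = 17³·w`; the equation becomes `w² = 277665 + 2ⁿ·17ⁿ⁻⁶`, solved by
`w = 527, 529, 593, 9263` for `n = 6, 7, 8, 10`. -/

theorem Set.encard_le_encard_of_forall_exists_prodMk {α β : Type*} {S : Set (α × β)} {T : Set β}
    (h : ∀ b ∈ T, ∃ a, (a, b) ∈ S) : T.encard ≤ S.encard := by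
  have hT : T ⊆ Prod.snd '' S := fun b hb ↦
    let ⟨a, ha⟩ := h b hb
    ⟨(a, b), ha, rfl⟩
  exact (Set.encard_le_encard hT).trans (Set.encard_image_le Prod.snd S)

/-- The equation `z² = 277665·17⁶ + 34ⁿ` has a solution for each
`n ∈ {6, 7, 8, 10}`, hence at least four solutions in nonnegative integers. -/
theorem quadruple_solution_277665 :
    (∀ n ∈ ({6, 7, 8, 10} : Set ℕ), ∃ z : ℕ, z ^ 2 = 277665 * 17 ^ 6 + 34 ^ n) ∧
      4 ≤ {p : ℕ × ℕ | p.1 ^ 2 = 277665 * 17 ^ 6 + 34 ^ p.2}.encard := by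
  have solutions : ∀ n ∈ ({6, 7, 8, 10} : Set ℕ), ∃ z : ℕ, z ^ 2 = 277665 * 17 ^ 6 + 34 ^ n := by
    rintro n (rfl | rfl | rfl | rfl)
    · exact ⟨17 ^ 3 * 527, by norm_num⟩
    · exact ⟨17 ^ 3 * 529, by norm_num⟩
    · exact ⟨17 ^ 3 * 593, by norm_num⟩
    · exact ⟨17 ^ 3 * 9263, by norm_num⟩
  have exponents_card : ({6, 7, 8, 10} : Set ℕ).encard = 4 := by
    rw [Set.encard_insert_of_notMem (by norm_num), Set.encard_insert_of_notMem (by norm_num),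
      Set.encard_pair (by norm_num)]
    rfl
  refine ⟨solutions, ?_⟩
  rw [← exponents_card]
  exact Set.encard_le_encard_of_forall_exists_prodMk solutions
end

section
/- Let k ≥ 3 be an integer and define D = 2^{2k} − 6·2^k + 1. Then the equation z² = D + 2ⁿ has at least four solutions in nonnegative integers, namely (z, n) = (2^k − 3, 3), (2^k − 1, k + 2), (2^k + 1, k + 3), (3·2^k − 1, 2k + 3). -/
theorem family_four_solutions_general
    (k : ℕ) (D : ℤ) (hD : D = 2 ^ (2 * k) - 6 * 2 ^ k + 1) :
    ((2 : ℤ) ^ k - 3) ^ 2 = D + 2 ^ 3 ∧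
      ((2 : ℤ) ^ k - 1) ^ 2 = D + 2 ^ (k + 2) ∧
      ((2 : ℤ) ^ k + 1) ^ 2 = D + 2 ^ (k + 3) ∧
      (3 * (2 : ℤ) ^ k - 1) ^ 2 = D + 2 ^ (2 * k + 3) := by
  subst hD
  refine ⟨?_, ?_, ?_, ?_⟩ <;> ring

/-- For `k ≥ 3` and `D = 2^{2k} − 6·2^k + 1`, the equation `z² = D + 2ⁿ` has the
four solutions `(2^k − 3, 3), (2^k − 1, k+2), (2^k + 1, k+3), (3·2^k − 1, 2k+3)`. -/
theorem family_four_solutions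
    (k : ℕ) (hk : 3 ≤ k) (D : ℤ) (hD : D = 2 ^ (2 * k) - 6 * 2 ^ k + 1) :
    ((2 : ℤ) ^ k - 3) ^ 2 = D + 2 ^ 3 ∧
      ((2 : ℤ) ^ k - 1) ^ 2 = D + 2 ^ (k + 2) ∧
      ((2 : ℤ) ^ k + 1) ^ 2 = D + 2 ^ (k + 3) ∧
      (3 * (2 : ℤ) ^ k - 1) ^ 2 = D + 2 ^ (2 * k + 3) :=
  family_four_solutions_general k D hD
end

section
/- Let m and k be integers with k ≥ m + 2 ≥ 4, and define D = (2^k − 2^m)² − 2·(2^k + 2^m) + 1. Then the equation z² = D + 2ⁿ has at least three solutions in nonnegative integers, namely (z, n) = (2^k − 2^m − 1, m + 2), (2^k − 2^m + 1, k + 2), (2^k + 2^m − 1, k + m + 2). -/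
theorem family_three_solutions_general
    (m k : ℕ)
    (D : ℤ) (hD : D = ((2 : ℤ) ^ k - 2 ^ m) ^ 2 - 2 * (2 ^ k + 2 ^ m) + 1) :
    ((2 : ℤ) ^ k - 2 ^ m - 1) ^ 2 = D + 2 ^ (m + 2) ∧
      ((2 : ℤ) ^ k - 2 ^ m + 1) ^ 2 = D + 2 ^ (k + 2) ∧
      ((2 : ℤ) ^ k + 2 ^ m - 1) ^ 2 = D + 2 ^ (k + m + 2) := by
  subst hD
  refine ⟨?_, ?_, ?_⟩ <;> ring

/-- For `k ≥ m + 2 ≥ 4` and `D = (2^k − 2^m)² − 2·(2^k + 2^m) + 1`, the equation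
`z² = D + 2ⁿ` has the three solutions
`(2^k − 2^m − 1, m+2), (2^k − 2^m + 1, k+2), (2^k + 2^m − 1, k+m+2)`. -/
theorem family_three_solutions
    (m k : ℕ) (hm : 2 ≤ m) (hk : m + 2 ≤ k)
    (D : ℤ) (hD : D = ((2 : ℤ) ^ k - 2 ^ m) ^ 2 - 2 * (2 ^ k + 2 ^ m) + 1) :
    ((2 : ℤ) ^ k - 2 ^ m - 1) ^ 2 = D + 2 ^ (m + 2) ∧
      ((2 : ℤ) ^ k - 2 ^ m + 1) ^ 2 = D + 2 ^ (k + 2) ∧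
      ((2 : ℤ) ^ k + 2 ^ m - 1) ^ 2 = D + 2 ^ (k + m + 2) :=
  family_three_solutions_general m k D hD
end

section
/- Let k ≥ 1 be an integer, and set A = 2^{6k} + 1 and D = −(2^{6k+3} − 1). Then the equation z² = D + A·2ⁿ has at least five solutions in nonnegative integers, namely (z, n) = (3, 3), (2^{4k+1} − 2^{2k+1} − 1, 2k + 2), (2^{6k+1} − 1, 6k + 2), (2^{6k+2} + 1, 6k + 4), (2^{12k+3} + 2^{6k+2} − 1, 18k + 6). -/
theorem family_five_solutions_general
    (k : ℕ) (A D : ℤ)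
    (hA : A = 2 ^ (6 * k) + 1) (hD : D = -(2 ^ (6 * k + 3) - 1)) :
    (3 : ℤ) ^ 2 = D + A * 2 ^ 3 ∧
      ((2 : ℤ) ^ (4 * k + 1) - 2 ^ (2 * k + 1) - 1) ^ 2 = D + A * 2 ^ (2 * k + 2) ∧
      ((2 : ℤ) ^ (6 * k + 1) - 1) ^ 2 = D + A * 2 ^ (6 * k + 2) ∧
      ((2 : ℤ) ^ (6 * k + 2) + 1) ^ 2 = D + A * 2 ^ (6 * k + 4) ∧
      ((2 : ℤ) ^ (12 * k + 3) + 2 ^ (6 * k + 2) - 1) ^ 2 = D + A * 2 ^ (18 * k + 6) := by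
  subst hA hD
  simp only [pow_add, pow_mul']
  generalize (2 : ℤ) ^ k = x
  exact ⟨by ring, by ring, by ring, by ring, by ring⟩

/-- For `k ≥ 1`, `A = 2^{6k} + 1` and `D = −(2^{6k+3} − 1)`, the equation
`z² = D + A·2ⁿ` has at least five solutions in nonnegative integers, namely at
`n = 3, 2k+2, 6k+2, 6k+4, 18k+6`. -/
theorem family_five_solutions
    (k : ℕ) (hk : 1 ≤ k) (A D : ℤ)
    (hA : A = 2 ^ (6 * k) + 1) (hD : D = -(2 ^ (6 * k + 3) - 1)) :
    (3 : ℤ) ^ 2 = D + A * 2 ^ 3 ∧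
      ((2 : ℤ) ^ (4 * k + 1) - 2 ^ (2 * k + 1) - 1) ^ 2 = D + A * 2 ^ (2 * k + 2) ∧
      ((2 : ℤ) ^ (6 * k + 1) - 1) ^ 2 = D + A * 2 ^ (6 * k + 2) ∧
      ((2 : ℤ) ^ (6 * k + 2) + 1) ^ 2 = D + A * 2 ^ (6 * k + 4) ∧
      ((2 : ℤ) ^ (12 * k + 3) + 2 ^ (6 * k + 2) - 1) ^ 2 = D + A * 2 ^ (18 * k + 6) :=
  family_five_solutions_general k A D hA hD
end
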